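/- arXiv:1802.00078 — 6 statements merged into one kernel-verified Lean document; each statement's English description precedes it below -/
import Mathlib

section
/- In the polynomial ring Z[x_1,...,x_s], for a sublattice L of Z^s with Z-basis given by the columns ℓ^1,...,ℓ^r of a matrix 𝕃, the lattice ideal J_L = ⟨x^u - x^v : u,v ∈ ℕ^s, u - v ∈ L⟩ equals the saturation of the ideal J_𝕃 = ⟨x^{ℓ^j_+} - x^{ℓ^j_-} : 1 ≤ j ≤ r⟩ with respect to the element x_1⋯x_s. -/
open MvPolynomial

/-- Turn a function `Fin s → ℕ` into a finitely supported function, to be used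
as the exponent vector of a monomial in `ℤ[x₁,…,x_s]`. -/
noncomputable def expOf {s : ℕ} (w : Fin s → ℕ) : Fin s →₀ ℕ :=
  Finsupp.equivFunOnFinite.symm w

@[simp] lemma expOf_apply {s : ℕ} (w : Fin s → ℕ) (i : Fin s) : expOf w i = w i := rfl

lemma expOf_coe {s : ℕ} (f : Fin s →₀ ℕ) : expOf (⇑f) = f :=
  Finsupp.equivFunOnFinite_symm_coe f

lemma monomial_mul_expOf {s : ℕ} (a b : Fin s → ℕ) :
    monomial (expOf a) (1:ℤ) * monomial (expOf b) 1
      = monomial (expOf (fun i => a i + b i)) 1 := by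
  rw [monomial_mul, one_mul]
  have : expOf a + expOf b = expOf (fun i => a i + b i) := by ext i; simp
  rw [this]

lemma prodX_pow_eq {s : ℕ} (N : ℕ) :
    ((∏ i : Fin s, (X i : MvPolynomial (Fin s) ℤ)) ^ N)
      = monomial (expOf (fun _ => N)) 1 := by
  cases N with
  | zero =>
    have : expOf (fun _ : Fin s => 0) = 0 := by ext i; simp
    simp [this]
  | succ n =>
    have hsupp : (expOf (fun _ : Fin s => n + 1)).support = Finset.univ := by
      ext i; simp [Finsupp.mem_support_iff]
    rw [← prod_X_pow_eq_monomial, hsupp, ← Finset.prod_pow]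
    exact Finset.prod_congr rfl (fun i _ => by rw [expOf_apply])

section Aux

variable {s : ℕ} (L : Submodule ℤ (Fin s → ℤ))

/-- The exponent-to-quotient-lattice additive map. -/
noncomputable def fmap : (Fin s →₀ ℕ) →+ ((Fin s → ℤ) ⧸ L) where
  toFun e := Submodule.Quotient.mk (fun i => (e i : ℤ))
  map_zero' := by
    show Submodule.Quotient.mk (fun i => (((0 : Fin s →₀ ℕ) i : ℤ))) = 0
    have : (fun i => (((0 : Fin s →₀ ℕ) i : ℤ))) = (0 : Fin s → ℤ) := by
      funext i; simp
    rw [this, Submodule.Quotient.mk_zero]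
  map_add' x y := by
    show Submodule.Quotient.mk _ = Submodule.Quotient.mk _ + Submodule.Quotient.mk _
    rw [← Submodule.Quotient.mk_add]
    have : (fun i => (((x + y : Fin s →₀ ℕ) i : ℤ)))
        = (fun i => (x i : ℤ)) + (fun i => (y i : ℤ)) := by
      funext i; simp
    rw [this]

@[simp] lemma fmap_apply (e : Fin s →₀ ℕ) :
    fmap L e = Submodule.Quotient.mk (fun i => (e i : ℤ)) := rfl

/-- The monomial-class ring hom to the group algebra of the quotient lattice. -/
noncomputable def phi : MvPolynomial (Fin s) ℤ →+* AddMonoidAlgebra ℤ ((Fin s → ℤ) ⧸ L) :=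
  AddMonoidAlgebra.mapDomainRingHom ℤ (fmap L)

lemma phi_apply (f : MvPolynomial (Fin s) ℤ) :
    phi L f = AddMonoidAlgebra.mapDomain (fmap L) f := rfl

lemma phi_monomial (e : Fin s →₀ ℕ) (a : ℤ) :
    phi L (monomial e a) = AddMonoidAlgebra.single (fmap L e) a := by
  rw [← single_eq_monomial, phi_apply]
  exact AddMonoidAlgebra.mapDomain_single

/-- The generating set of the lattice ideal. -/
def JLset : Set (MvPolynomial (Fin s) ℤ) :=
  {p | ∃ u v : Fin s → ℕ,
      (fun i => (u i : ℤ) - (v i : ℤ)) ∈ L ∧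
      p = monomial (expOf u) 1 - monomial (expOf v) 1}

lemma mem_JLset_of_classes_eq (d' d : Fin s →₀ ℕ) (h : fmap L d' = fmap L d) :
    (monomial d' 1 - monomial d 1 : MvPolynomial (Fin s) ℤ) ∈ JLset L := by
  refine ⟨⇑d', ⇑d, ?_, by rw [expOf_coe, expOf_coe]⟩
  rw [fmap_apply, fmap_apply, Submodule.Quotient.eq] at h
  exact h

lemma span_JLset_le_ker : Ideal.span (JLset L) ≤ RingHom.ker (phi L) := by
  rw [Ideal.span_le]
  rintro p ⟨u, v, hL, rfl⟩
  rw [SetLike.mem_coe, RingHom.mem_ker, map_sub, phi_monomial, phi_monomial]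
  have : fmap L (expOf u) = fmap L (expOf v) := by
    rw [fmap_apply, fmap_apply, Submodule.Quotient.eq]
    exact hL
  rw [this, sub_self]

lemma ker_le_span_JLset :
    ∀ (n : ℕ) (f : MvPolynomial (Fin s) ℤ), f.support.card ≤ n → phi L f = 0 →
      f ∈ Ideal.span (JLset L) := by
  intro n
  induction n with
  | zero =>
    intro f hcard _
    have : f.support = ∅ := Finset.card_eq_zero.mp (Nat.le_zero.mp hcard)
    rw [support_eq_empty.mp this]
    exact Ideal.zero_mem _
  | succ n ih =>
    intro f hcard hf
    by_cases h0 : f = 0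
    · rw [h0]; exact Ideal.zero_mem _
    obtain ⟨d, hd⟩ : f.support.Nonempty :=
      Finset.nonempty_iff_ne_empty.mpr (fun h => h0 (support_eq_empty.mp h))
    classical
    set T := f.support.filter (fun d' => fmap L d' = fmap L d) with hT
    have hdT : d ∈ T := by
      rw [hT, Finset.mem_filter]; exact ⟨hd, rfl⟩
    -- the sum of coefficients over the class T vanishes
    have hsum : ∑ d' ∈ T, coeff d' f = 0 := by
      have h1 : (phi L f).coeff (fmap L d) = 0 := by rw [hf]; rfl
      change (Finsupp.mapDomain (fmap L) (AddMonoidAlgebra.coeff f)) (fmap L d) = 0 at h1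
      rw [Finsupp.mapDomain, Finsupp.sum_apply, Finsupp.sum] at h1
      simp only [Finsupp.single_apply] at h1
      rw [hT, Finset.sum_filter]
      exact h1
    set q : MvPolynomial (Fin s) ℤ :=
      ∑ d' ∈ T, (monomial d' (coeff d' f) - monomial d (coeff d' f)) with hq
    have hqJL : q ∈ Ideal.span (JLset L) := by
      refine Ideal.sum_mem _ (fun d' hd' => ?_)
      have hclass : fmap L d' = fmap L d := (Finset.mem_filter.mp hd').2
      have : (monomial d' (coeff d' f) - monomial d (coeff d' f) : MvPolynomial (Fin s) ℤ)
          = C (coeff d' f) * (monomial d' 1 - monomial d 1) := by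
        rw [mul_sub, C_mul_monomial, C_mul_monomial, mul_one]
      rw [this]
      exact Ideal.mul_mem_left _ _ (Ideal.subset_span (mem_JLset_of_classes_eq L d' d hclass))
    have hq2 : q = ∑ d' ∈ T, monomial d' (coeff d' f) := by
      rw [hq, Finset.sum_sub_distrib, ← map_sum (monomial d), hsum, map_zero, sub_zero]
    set g : MvPolynomial (Fin s) ℤ := f - q with hg
    have hgphi : phi L g = 0 := by
      have : phi L q = 0 := span_JLset_le_ker L hqJL
      rw [hg, map_sub, hf, this, sub_zero]
    have hcoeffq : ∀ e, coeff e q = if e ∈ T then coeff e f else 0 := by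
      intro e
      rw [hq2]
      rw [coeff_sum]
      simp only [coeff_monomial]
      exact Finset.sum_ite_eq' T e (fun d' => coeff d' f)
    have hgsupp : g.support ⊆ f.support \ T := by
      intro e he
      rw [mem_support_iff] at he
      rw [hg, coeff_sub, hcoeffq] at he
      by_cases heT : e ∈ T
      · simp [heT] at he
      · rw [if_neg heT, sub_zero] at he
        exact Finset.mem_sdiff.mpr ⟨mem_support_iff.mpr he, heT⟩
    have hcard' : g.support.card ≤ n := by
      have h1 : g.support.card ≤ (f.support \ T).card := Finset.card_le_card hgsupp
      have h2 : (f.support \ T).card = f.support.card - T.card :=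
        Finset.card_sdiff_of_subset (Finset.filter_subset _ _)
      have h3 : 1 ≤ T.card := Finset.card_pos.mpr ⟨d, hdT⟩
      omega
    have hgJL := ih g hcard' hgphi
    have : f = g + q := by rw [hg]; ring
    rw [this]
    exact Ideal.add_mem _ hgJL hqJL

lemma phi_single_isUnit (gq : (Fin s → ℤ) ⧸ L) :
    IsUnit (AddMonoidAlgebra.single gq (1:ℤ)) := by
  refine IsUnit.of_mul_eq_one (AddMonoidAlgebra.single (-gq) 1) ?_
  rw [AddMonoidAlgebra.single_mul_single]
  simp [AddMonoidAlgebra.one_def]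

/-- The binomial attached to an integer vector. -/
noncomputable def Dw {s : ℕ} (w : Fin s → ℤ) : MvPolynomial (Fin s) ℤ :=
  monomial (expOf fun i => (w i).toNat) 1 - monomial (expOf fun i => (-w i).toNat) 1

lemma Dw_neg {s : ℕ} (w : Fin s → ℤ) : Dw (-w) = - Dw w := by
  have h2 : (expOf fun i => (-(-w) i).toNat) = expOf fun i => (w i).toNat := by
    congr 1; funext i; simp
  rw [Dw, Dw, h2, neg_sub]
  rfl

lemma Dw_key {s : ℕ} (w₁ w₂ : Fin s → ℤ) :
    monomial (expOf fun i => (w₁ i).toNat + (w₂ i).toNat - (w₁ i + w₂ i).toNat) (1:ℤ)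
        * Dw (fun i => w₁ i + w₂ i)
      = monomial (expOf fun i => (w₁ i).toNat) 1 * Dw w₂
        + monomial (expOf fun i => (-w₂ i).toNat) 1 * Dw w₁ := by
  simp only [Dw, mul_sub, monomial_mul_expOf]
  have e1 : (fun i => ((w₁ i).toNat + (w₂ i).toNat - (w₁ i + w₂ i).toNat) + (w₁ i + w₂ i).toNat)
      = fun i => (w₁ i).toNat + (w₂ i).toNat := by funext i; omega
  have e2 : (fun i => ((w₁ i).toNat + (w₂ i).toNat - (w₁ i + w₂ i).toNat) + (-(w₁ i + w₂ i)).toNat)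
      = fun i => (-w₁ i).toNat + (-w₂ i).toNat := by funext i; omega
  have e3 : (fun i => (-w₂ i).toNat + (w₁ i).toNat) = fun i => (w₁ i).toNat + (-w₂ i).toNat := by
    funext i; omega
  have e4 : (fun i => (-w₂ i).toNat + (-w₁ i).toNat) = fun i => (-w₁ i).toNat + (-w₂ i).toNat := by
    funext i; omega
  rw [e1, e2, e3, e4]
  abel

end Aux

lemma shake {s : ℕ} (JLL : Ideal (MvPolynomial (Fin s) ℤ)) (E : Fin s → ℕ)
    (h : MvPolynomial (Fin s) ℤ) (hmem : monomial (expOf E) 1 * h ∈ JLL) :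
    ∃ M : ℕ, h * (∏ i, X i) ^ M ∈ JLL := by
  refine ⟨∑ i, E i, ?_⟩
  have hle : ∀ i, E i ≤ ∑ j, E j :=
    fun i => Finset.single_le_sum (fun _ _ => Nat.zero_le _) (Finset.mem_univ i)
  have key : h * (∏ i, X i) ^ (∑ i, E i)
      = monomial (expOf fun i => (∑ j, E j) - E i) 1 * (monomial (expOf E) 1 * h) := by
    rw [← mul_assoc, monomial_mul_expOf]
    have efun : (fun i => ((∑ j, E j) - E i) + E i) = fun _ : Fin s => ∑ j, E j := by
      funext i
      have := hle i
      omega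
    rw [efun, ← prodX_pow_eq, mul_comm]
  rw [key]
  exact Ideal.mul_mem_left _ _ hmem

/-- The lattice ideal lemma for polynomial rings: if `ℓ¹,…,ℓʳ` is a ℤ-basis of
the sublattice `L ≤ ℤ^s`, then in `ℤ[x₁,…,x_s]` the lattice ideal
`J_L = ⟨x^u - x^v : u,v ∈ ℕ^s, u - v ∈ L⟩` equals the saturation of
`J_𝕃 = ⟨x^{ℓʲ₊} - x^{ℓʲ₋}⟩` with respect to `x₁⋯x_s`. -/
theorem lattice_ideal_lemma_polynomial (s r : ℕ) (L : Submodule ℤ (Fin s → ℤ))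
    (ℓ : Fin r → Fin s → ℤ) (hindep : LinearIndependent ℤ ℓ)
    (hspan : Submodule.span ℤ (Set.range ℓ) = L)
    (JL JLL : Ideal (MvPolynomial (Fin s) ℤ))
    (hJL : JL = Ideal.span {p | ∃ u v : Fin s → ℕ,
      (fun i => (u i : ℤ) - (v i : ℤ)) ∈ L ∧
      p = monomial (expOf u) 1 - monomial (expOf v) 1})
    (hJLL : JLL = Ideal.span (Set.range fun j =>
      monomial (expOf fun i => (ℓ j i).toNat) (1 : ℤ) -
        monomial (expOf fun i => (-(ℓ j i)).toNat) (1 : ℤ))) :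
    ∀ f : MvPolynomial (Fin s) ℤ,
      f ∈ JL ↔ ∃ N : ℕ, 0 < N ∧ f * (∏ i, X i) ^ N ∈ JLL := by
  intro f
  have hJLset : JL = Ideal.span (JLset L) := hJL
  have hker : JL = RingHom.ker (phi L) := by
    rw [hJLset]
    apply le_antisymm (span_JLset_le_ker L)
    intro g hg
    exact ker_le_span_JLset L g.support.card g le_rfl hg
  constructor
  · -- forward direction
    intro hf
    -- properties of the predicate ∃ N, Dw w * c^N ∈ JLL
    have Pzero : ∃ N : ℕ, Dw (0 : Fin s → ℤ) * (∏ i, X i) ^ N ∈ JLL := by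
      have hD : Dw (0 : Fin s → ℤ) = 0 := by
        have h : (fun i => (-(0 : Fin s → ℤ) i).toNat) = (fun i => ((0 : Fin s → ℤ) i).toNat) := by
          funext i; simp
        rw [Dw, h, sub_self]
      exact ⟨0, by rw [hD, zero_mul]; exact Ideal.zero_mem _⟩
    have Pneg : ∀ x : Fin s → ℤ, (∃ N : ℕ, Dw x * (∏ i, X i) ^ N ∈ JLL) →
        ∃ N : ℕ, Dw (-x) * (∏ i, X i) ^ N ∈ JLL := by
      rintro x ⟨N, hN⟩
      refine ⟨N, ?_⟩
      rw [Dw_neg, neg_mul]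
      exact neg_mem hN
    have Padd : ∀ x y : Fin s → ℤ, (∃ N : ℕ, Dw x * (∏ i, X i) ^ N ∈ JLL) →
        (∃ N : ℕ, Dw y * (∏ i, X i) ^ N ∈ JLL) →
        ∃ N : ℕ, Dw (x + y) * (∏ i, X i) ^ N ∈ JLL := by
      rintro x y ⟨N₁, h₁⟩ ⟨N₂, h₂⟩
      have hD : Dw (x + y) = Dw (fun i => x i + y i) := rfl
      have hmem : monomial (expOf fun i => (x i).toNat + (y i).toNat - (x i + y i).toNat) 1
          * (Dw (x + y) * (∏ i, X i) ^ (N₁ + N₂)) ∈ JLL := by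
        have hiden : monomial (expOf fun i => (x i).toNat + (y i).toNat - (x i + y i).toNat) 1
            * (Dw (x + y) * (∏ i, X i) ^ (N₁ + N₂))
            = (monomial (expOf fun i => (x i).toNat) 1 * (Dw y * (∏ i, X i) ^ N₂))
                * (∏ i, X i) ^ N₁
              + (monomial (expOf fun i => (-y i).toNat) 1 * (Dw x * (∏ i, X i) ^ N₁))
                * (∏ i, X i) ^ N₂ := by
          rw [hD]
          linear_combination (∏ i, X i) ^ (N₁ + N₂) * Dw_key x y
        rw [hiden]
        exact Ideal.add_mem _
          (Ideal.mul_mem_right _ _ (Ideal.mul_mem_left _ _ h₂))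
          (Ideal.mul_mem_right _ _ (Ideal.mul_mem_left _ _ h₁))
      obtain ⟨M, hM⟩ := shake JLL _ _ hmem
      exact ⟨N₁ + N₂ + M, by rw [pow_add, ← mul_assoc]; exact hM⟩
    have key : ∀ w, w ∈ L → ∃ N : ℕ, Dw w * (∏ i, X i) ^ N ∈ JLL := by
      intro w hw
      rw [← hspan] at hw
      refine Submodule.span_induction ?_ Pzero (fun x y _ _ hx hy => Padd x y hx hy) ?_ hw
      · rintro x ⟨j, rfl⟩
        refine ⟨0, ?_⟩
        rw [pow_zero, mul_one]
        rw [hJLL]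
        exact Ideal.subset_span ⟨j, rfl⟩
      · rintro a x - hx
        induction a using Int.induction_on with
        | zero => rw [zero_smul]; exact Pzero
        | succ k ih =>
          have : ((k : ℤ) + 1) • x = (k : ℤ) • x + x := by rw [add_smul, one_smul]
          rw [this]
          exact Padd _ _ ih hx
        | pred k ih =>
          have : (-(k : ℤ) - 1) • x = (-(k : ℤ)) • x + (-x) := by
            rw [sub_smul, one_smul, sub_eq_add_neg]
          rw [this]
          exact Padd _ _ ih (Pneg x hx)
    have main : ∃ N : ℕ, f * (∏ i, X i) ^ N ∈ JLL := by
      rw [hJL] at hf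
      refine Submodule.span_induction ?_ ?_ ?_ ?_ hf
      · rintro p ⟨u, v, huv, rfl⟩
        obtain ⟨N, hN⟩ := key _ huv
        have hfactor : (monomial (expOf u) 1 - monomial (expOf v) 1 : MvPolynomial (Fin s) ℤ)
            = monomial (expOf fun i => min (u i) (v i)) 1
              * Dw (fun i => (u i : ℤ) - (v i : ℤ)) := by
          rw [Dw, mul_sub, monomial_mul_expOf, monomial_mul_expOf]
          congr 2 <;> · congr 1; ext i; simp; omega
        refine ⟨N, ?_⟩
        rw [hfactor, mul_assoc]
        exact Ideal.mul_mem_left _ _ hN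
      · exact ⟨0, by rw [zero_mul]; exact Ideal.zero_mem _⟩
      · rintro x y - - ⟨N₁, h₁⟩ ⟨N₂, h₂⟩
        refine ⟨N₁ + N₂, ?_⟩
        have : (x + y) * (∏ i, X i) ^ (N₁ + N₂)
            = (x * (∏ i, X i) ^ N₁) * (∏ i, X i) ^ N₂
              + (y * (∏ i, X i) ^ N₂) * (∏ i, X i) ^ N₁ := by
          rw [pow_add]; ring
        rw [this]
        exact Ideal.add_mem _ (Ideal.mul_mem_right _ _ h₁) (Ideal.mul_mem_right _ _ h₂)
      · rintro a x - ⟨N, hN⟩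
        refine ⟨N, ?_⟩
        rw [smul_eq_mul, mul_assoc]
        exact Ideal.mul_mem_left _ _ hN
    obtain ⟨N, hN⟩ := main
    refine ⟨N + 1, N.succ_pos, ?_⟩
    rw [pow_succ, ← mul_assoc]
    exact Ideal.mul_mem_right _ _ hN
  · -- reverse direction
    rintro ⟨N, -, hmem⟩
    have hsub : JLL ≤ JL := by
      rw [hJLL, hJL]
      apply Ideal.span_le.mpr
      rintro p ⟨j, rfl⟩
      apply Ideal.subset_span
      refine ⟨fun i => (ℓ j i).toNat, fun i => (-(ℓ j i)).toNat, ?_, rfl⟩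
      have : (fun i => (((ℓ j i).toNat : ℤ)) - (((-(ℓ j i)).toNat : ℤ))) = ℓ j := by
        funext i; omega
      rw [this, ← hspan]
      exact Submodule.subset_span ⟨j, rfl⟩
    have hfk : phi L f * phi L ((∏ i, X i) ^ N) = 0 := by
      rw [← map_mul]
      have : f * (∏ i, X i) ^ N ∈ JL := hsub hmem
      rw [hker] at this
      exact this
    have hunit : IsUnit (phi L ((∏ i, X i) ^ N)) := by
      rw [prodX_pow_eq, phi_monomial]
      exact phi_single_isUnit L _
    obtain ⟨u, hu⟩ := hunit
    have hf0 : phi L f = 0 := by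
      have h1 : phi L f * (u : AddMonoidAlgebra ℤ ((Fin s → ℤ) ⧸ L)) = 0 := by
        rw [hu]; exact hfk
      calc phi L f = phi L f * u * ↑u⁻¹ := by rw [Units.mul_inv_cancel_right]
        _ = 0 := by rw [h1, zero_mul]
    rw [hker]
    exact hf0
end

section
/- Let L and L' be sublattices of Z^s. Then, working in the Laurent polynomial ring Z[x_1^{±1},...,x_s^{±1}], the lattice ideal J_L is contained in J_{L'} if and only if L ≤ L'. -/
/-- The Laurent monomial `x^w` in `ℤ[x₁^{±1},…,x_s^{±1}]`, modelled as the
group algebra `AddMonoidAlgebra ℤ (Fin s → ℤ)`. -/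
noncomputable def Lmon (s : ℕ) (w : Fin s → ℤ) : AddMonoidAlgebra ℤ (Fin s → ℤ) :=
  AddMonoidAlgebra.single w 1

/-- The lattice ideal of a sublattice `L ≤ ℤ^s` in the Laurent polynomial ring. -/
noncomputable def latticeIdeal (s : ℕ) (L : Submodule ℤ (Fin s → ℤ)) :
    Ideal (AddMonoidAlgebra ℤ (Fin s → ℤ)) :=
  Ideal.span {p | ∃ u v : Fin s → ℤ, u - v ∈ L ∧ p = Lmon s u - Lmon s v}

/-- For sublattices `L, L'` of `ℤ^s`, the lattice ideals in the Laurent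
polynomial ring satisfy `J_L ≤ J_{L'}` iff `L ≤ L'`. -/
theorem latticeIdeal_le_iff (s : ℕ) (L L' : Submodule ℤ (Fin s → ℤ)) :
    latticeIdeal s L ≤ latticeIdeal s L' ↔ L ≤ L' := by
  constructor
  · intro h u hu
    -- map to the group algebra of the quotient by L'
    let φ : AddMonoidAlgebra ℤ (Fin s → ℤ) →+*
        AddMonoidAlgebra ℤ ((Fin s → ℤ) ⧸ L') :=
      AddMonoidAlgebra.mapDomainRingHom ℤ L'.mkQ.toAddMonoidHom
    have hker : latticeIdeal s L' ≤ RingHom.ker φ := by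
      rw [latticeIdeal, Ideal.span_le]
      rintro p ⟨a, b, hab, rfl⟩
      simp only [SetLike.mem_coe, RingHom.mem_ker, map_sub]
      have : φ (Lmon s a) = φ (Lmon s b) := by
        show AddMonoidAlgebra.mapDomain _ _ = AddMonoidAlgebra.mapDomain _ _
        rw [Lmon, Lmon]
        rw [AddMonoidAlgebra.mapDomain_single, AddMonoidAlgebra.mapDomain_single]
        congr 1
        simpa [Submodule.Quotient.eq] using hab
      rw [this, sub_self]
    have hmem : Lmon s u - Lmon s 0 ∈ latticeIdeal s L := by
      apply Ideal.subset_span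
      exact ⟨u, 0, by simpa using hu, rfl⟩
    have h0 : φ (Lmon s u - Lmon s 0) = 0 := hker (h hmem)
    rw [map_sub, sub_eq_zero] at h0
    have h1 : AddMonoidAlgebra.mapDomain (L'.mkQ) (AddMonoidAlgebra.single u (1:ℤ)) =
        AddMonoidAlgebra.mapDomain (L'.mkQ) (AddMonoidAlgebra.single 0 (1:ℤ)) := h0
    rw [AddMonoidAlgebra.mapDomain_single, AddMonoidAlgebra.mapDomain_single] at h1
    rcases AddMonoidAlgebra.single_inj.mp h1 with ⟨he, -⟩ | ⟨h1, -⟩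
    · have : L'.mkQ u = 0 := by simpa using he
      simpa [Submodule.Quotient.mk_eq_zero] using this
    · exact absurd h1 one_ne_zero
  · intro h
    rw [latticeIdeal, Ideal.span_le]
    rintro p ⟨a, b, hab, rfl⟩
    exact Ideal.subset_span ⟨a, b, h hab, rfl⟩
end

section
/- Let ν_1,...,ν_m ∈ Z^2 be vectors. The ideal ⟨1 - x^{ν_1}, ..., 1 - x^{ν_m}⟩ in Z[α^{±1}, β^{±1}] equals ⟨1 - α, 1 - β⟩ if and only if ν_1,...,ν_m span Z^2 over Z. -/
lemma Lmon_mul (s : ℕ) (a b : Fin s → ℤ) : Lmon s a * Lmon s b = Lmon s (a + b) := by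
  simp [Lmon, AddMonoidAlgebra.single_mul_single]

lemma Lmon_zero (s : ℕ) : Lmon s 0 = 1 := by
  simp [Lmon, AddMonoidAlgebra.one_def]

noncomputable def goodSet (s : ℕ) (J : Ideal (AddMonoidAlgebra ℤ (Fin s → ℤ))) :
    Submodule ℤ (Fin s → ℤ) :=
  AddSubgroup.toIntSubmodule
  { carrier := {g | 1 - Lmon s g ∈ J}
    zero_mem' := by simp [Lmon_zero]
    add_mem' := by
      intro a b ha hb
      have h : 1 - Lmon s (a + b) = (1 - Lmon s a) + Lmon s a * (1 - Lmon s b) := by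
        rw [mul_sub, mul_one, Lmon_mul]; ring
      show 1 - Lmon s (a + b) ∈ J; rw [h]; exact Ideal.add_mem J ha (Ideal.mul_mem_left J _ hb)
    neg_mem' := by
      intro a ha
      have h : 1 - Lmon s (-a) = -(Lmon s (-a) * (1 - Lmon s a)) := by
        rw [mul_sub, mul_one, Lmon_mul, neg_add_cancel, Lmon_zero]; ring
      show 1 - Lmon s (-a) ∈ J; rw [h]; exact neg_mem (Ideal.mul_mem_left J _ ha) }

lemma mem_goodSet {s : ℕ} {J : Ideal (AddMonoidAlgebra ℤ (Fin s → ℤ))} {g : Fin s → ℤ} :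
    g ∈ goodSet s J ↔ 1 - Lmon s g ∈ J := Iff.rfl

lemma span_singles : Submodule.span ℤ ({Pi.single 0 1, Pi.single 1 1} : Set (Fin 2 → ℤ)) = ⊤ := by
  rw [Submodule.eq_top_iff']
  intro g
  have h : g = g 0 • (Pi.single 0 1 : Fin 2 → ℤ) + g 1 • (Pi.single 1 1 : Fin 2 → ℤ) := by
    ext i; fin_cases i <;> simp
  rw [h]
  exact Submodule.add_mem _
    (Submodule.smul_mem _ _ (Submodule.subset_span (Or.inl rfl)))
    (Submodule.smul_mem _ _ (Submodule.subset_span (Or.inr rfl)))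


/-- In `ℤ[α^{±1}, β^{±1}]` (Laurent polynomials in two variables, with
`α = x^{(1,0)}`, `β = x^{(0,1)}`), the ideal `⟨1 - x^{ν₁}, …, 1 - x^{ν_m}⟩`
equals `⟨1 - α, 1 - β⟩` if and only if `ν₁,…,ν_m` span `ℤ²` over `ℤ`. -/
theorem span_euler_eq_iff_span_lattice (m : ℕ) (ν : Fin m → Fin 2 → ℤ) :
    Ideal.span (Set.range fun j => 1 - Lmon 2 (ν j)) =
      Ideal.span {1 - Lmon 2 (Pi.single 0 1), 1 - Lmon 2 (Pi.single 1 1)} ↔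
    Submodule.span ℤ (Set.range ν) = ⊤ := by
  constructor
  · intro h
    set L := Submodule.span ℤ (Set.range ν) with hL
    let φ : AddMonoidAlgebra ℤ (Fin 2 → ℤ) →+* AddMonoidAlgebra ℤ ((Fin 2 → ℤ) ⧸ L) :=
      AddMonoidAlgebra.mapDomainRingHom ℤ L.mkQ.toAddMonoidHom
    have hφ : ∀ w : Fin 2 → ℤ, φ (Lmon 2 w) = AddMonoidAlgebra.single (L.mkQ w) 1 := by
      intro w
      simp [φ, Lmon, AddMonoidAlgebra.mapDomainRingHom, Finsupp.mapDomain_single]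
    have hker : Ideal.span (Set.range fun j => 1 - Lmon 2 (ν j)) ≤ RingHom.ker φ := by
      rw [Ideal.span_le]
      rintro _ ⟨j, rfl⟩
      have hmem : ν j ∈ L := Submodule.subset_span ⟨j, rfl⟩
      show 1 - Lmon 2 (ν j) ∈ RingHom.ker φ
      have : L.mkQ (ν j) = 0 := by
        rwa [Submodule.mkQ_apply, Submodule.Quotient.mk_eq_zero]
      rw [RingHom.mem_ker, map_sub, hφ, this, AddMonoidAlgebra.one_def,
        show (AddMonoidAlgebra.single (0 : Fin 2 → ℤ) (1:ℤ)) = Lmon 2 0 from rfl, hφ, map_zero,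
        sub_self]
    rw [h] at hker
    have hsing : ∀ i : Fin 2, (Pi.single i 1 : Fin 2 → ℤ) ∈ L := by
      intro i
      have h1 : (1 : AddMonoidAlgebra ℤ (Fin 2 → ℤ)) - Lmon 2 (Pi.single i 1) ∈
          Ideal.span {1 - Lmon 2 (Pi.single 0 1), 1 - Lmon 2 (Pi.single 1 1)} := by
        apply Ideal.subset_span
        fin_cases i
        · exact Or.inl rfl
        · exact Or.inr rfl
      have h2 := hker h1
      rw [RingHom.mem_ker, map_sub, hφ, map_one, sub_eq_zero, AddMonoidAlgebra.one_def] at h2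
      have h3 : L.mkQ (Pi.single i 1) = 0 := by
        rcases AddMonoidAlgebra.single_inj.mp h2.symm with ⟨h4, _⟩ | ⟨h4, _⟩
        · exact h4
        · exact absurd h4 one_ne_zero
      rwa [Submodule.mkQ_apply, Submodule.Quotient.mk_eq_zero] at h3
    rw [hL, eq_top_iff, ← span_singles, Submodule.span_le]
    rintro x (rfl | rfl)
    exacts [hsing 0, hsing 1]
  · intro h
    apply le_antisymm
    · rw [Ideal.span_le]
      rintro _ ⟨j, rfl⟩
      have htop : goodSet 2 (Ideal.span {1 - Lmon 2 (Pi.single 0 1), 1 - Lmon 2 (Pi.single 1 1)}) = ⊤ := by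
        rw [eq_top_iff, ← span_singles, Submodule.span_le]
        rintro x (rfl | rfl)
        · exact Ideal.subset_span (Or.inl rfl)
        · exact Ideal.subset_span (Or.inr rfl)
      have := Submodule.eq_top_iff'.mp htop (ν j)
      exact this
    · rw [Ideal.span_le]
      have htop : goodSet 2 (Ideal.span (Set.range fun j => 1 - Lmon 2 (ν j))) = ⊤ := by
        rw [eq_top_iff, ← h, Submodule.span_le]
        rintro _ ⟨j, rfl⟩
        exact Ideal.subset_span ⟨j, rfl⟩
      rintro x (rfl | rfl)
      · exact Submodule.eq_top_iff'.mp htop (Pi.single 0 1)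
      · exact Submodule.eq_top_iff'.mp htop (Pi.single 1 1)
end

section
/- Let σ ⊂ R^n be the standard coordinate cone spanned by e_1,...,e_d, with facets τ_i = σ ∩ {x_i = 0} for 1 ≤ i ≤ d, so that J_{τ_i} = ⟨1 - α_i⟩ in Z[α_1^{±1},...,α_d^{±1}]. Then for any tuple (F_1,...,F_d) of Laurent polynomials satisfying F_i - F_j ∈ ⟨1 - α_i, 1 - α_j⟩ for all i ≠ j, there exists a single Laurent polynomial F with F - F_i ∈ ⟨1 - α_i⟩ for all 1 ≤ i ≤ d. -/
namespace GlueAux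

variable {d : ℕ}

abbrev R (d : ℕ) := AddMonoidAlgebra ℤ (Fin d → ℤ)

def zmap (T : Finset (Fin d)) : (Fin d → ℤ) →+ (Fin d → ℤ) where
  toFun w := fun k => if k ∈ T then 0 else w k
  map_zero' := by funext k; simp
  map_add' u v := by funext k; by_cases h : k ∈ T <;> simp [h]

noncomputable def φ (T : Finset (Fin d)) : R d →+* R d :=
  AddMonoidAlgebra.mapDomainRingHom ℤ (zmap T)

noncomputable def I (i : Fin d) : Ideal (R d) := Ideal.span {1 - Lmon d (Pi.single i 1)}

lemma Lmon_add (u v : Fin d → ℤ) : Lmon d (u + v) = Lmon d u * Lmon d v := by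
  simp [Lmon, AddMonoidAlgebra.single_mul_single]

lemma Lmon_zero : Lmon d 0 = 1 := rfl

lemma φ_Lmon (T : Finset (Fin d)) (w : Fin d → ℤ) :
    φ T (Lmon d w) = Lmon d (zmap T w) := by
  simp [φ, Lmon, AddMonoidAlgebra.mapDomainRingHom]

lemma φ_const (T : Finset (Fin d)) (r : ℤ) :
    φ T (AddMonoidAlgebra.single 0 r) = AddMonoidAlgebra.single 0 r := by
  simp [φ, AddMonoidAlgebra.mapDomainRingHom]

end GlueAux

namespace GlueAux
variable {d : ℕ}

lemma φ_comp (T U : Finset (Fin d)) (f : R d) : φ T (φ U f) = φ (T ∪ U) f := by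
  have : (φ T).comp (φ U) = φ (T ∪ U : Finset (Fin d)) := by
    apply AddMonoidAlgebra.ringHom_ext
    · intro b; simp [φ_const]
    · intro a
      show φ T (φ U (Lmon d a)) = φ (T ∪ U) (Lmon d a)
      rw [φ_Lmon, φ_Lmon, φ_Lmon]
      congr 1
      funext k
      by_cases hT : k ∈ T <;> by_cases hU : k ∈ U <;> simp [zmap, hT, hU]
  exact RingHom.congr_fun this f

lemma φ_empty (f : R d) : φ (∅ : Finset (Fin d)) f = f := by
  have : φ (∅ : Finset (Fin d)) = RingHom.id (R d) := by
    apply AddMonoidAlgebra.ringHom_ext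
    · intro b; simp [φ_const]
    · intro a
      show φ (∅ : Finset (Fin d)) (Lmon d a) = Lmon d a
      rw [φ_Lmon]
      have hz : zmap (∅ : Finset (Fin d)) a = a := by funext k; simp [zmap]
      rw [hz]
  rw [this]; rfl

lemma mk_Lmon_single (i : Fin d) :
    Ideal.Quotient.mk (I i) (Lmon d (Pi.single i 1)) = 1 := by
  have : Ideal.Quotient.mk (I i) (1 - Lmon d (Pi.single i 1)) = 0 := by
    rw [Ideal.Quotient.eq_zero_iff_mem]
    exact Ideal.subset_span rfl
  rw [map_sub, map_one, sub_eq_zero] at this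
  exact this.symm

lemma mk_Lmon_zsmul (i : Fin d) (n : ℤ) :
    Ideal.Quotient.mk (I i) (Lmon d (n • Pi.single i 1)) = 1 := by
  have hneg : Ideal.Quotient.mk (I i) (Lmon d (-(Pi.single i (1:ℤ)))) = 1 := by
    have := Lmon_add (-(Pi.single i (1:ℤ))) (Pi.single i (1:ℤ))
    rw [neg_add_cancel, Lmon_zero] at this
    have h2 := congrArg (Ideal.Quotient.mk (I i)) this
    rw [map_one, map_mul, mk_Lmon_single, mul_one] at h2
    exact h2.symm
  induction n using Int.induction_on with
  | zero => simp [Lmon_zero]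
  | succ k ih =>
      have : ((k : ℤ) + 1) • Pi.single i (1:ℤ) = ((k : ℤ) • Pi.single i (1:ℤ) : Fin d → ℤ) + Pi.single i (1:ℤ) := by
        rw [add_smul, one_smul]
      rw [this, Lmon_add, map_mul, ih, mk_Lmon_single, mul_one]
  | pred k ih =>
      have : (-(k : ℤ) - 1) • Pi.single i (1:ℤ) = ((-(k : ℤ)) • Pi.single i (1:ℤ) : Fin d → ℤ) + (-(Pi.single i (1:ℤ))) := by
        rw [sub_smul, one_smul, sub_eq_add_neg]
      rw [this, Lmon_add, map_mul, ih, hneg, mul_one]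

lemma mk_φ_single (i : Fin d) (f : R d) :
    Ideal.Quotient.mk (I i) (φ {i} f) = Ideal.Quotient.mk (I i) f := by
  have : (Ideal.Quotient.mk (I i)).comp (φ {i}) = Ideal.Quotient.mk (I i) := by
    apply AddMonoidAlgebra.ringHom_ext
    · intro b; simp [φ_const]
    · intro a
      show Ideal.Quotient.mk (I i) (φ {i} (Lmon d a)) = Ideal.Quotient.mk (I i) (Lmon d a)
      rw [φ_Lmon]
      have hsplit : a = zmap ({i} : Finset (Fin d)) a + (a i) • Pi.single i 1 := by
        funext k
        by_cases hk : k = i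
        · subst hk; simp [zmap]
        · simp [zmap, hk, Pi.single_apply]
      conv_rhs => rw [hsplit]
      rw [Lmon_add, map_mul, mk_Lmon_zsmul, mul_one]
  exact RingHom.congr_fun this f

lemma φ_kill_gen (T : Finset (Fin d)) (j : Fin d) (hj : j ∈ T) :
    φ T (1 - Lmon d (Pi.single j 1)) = 0 := by
  rw [map_sub, map_one, φ_Lmon]
  have : zmap T (Pi.single j (1:ℤ)) = 0 := by
    funext k
    by_cases hk : k ∈ T
    · simp [zmap, hk]
    · have : k ≠ j := fun h => hk (h ▸ hj)
      simp [zmap, hk, Pi.single_apply, this]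
  rw [this, Lmon_zero, sub_self]

end GlueAux

namespace GlueAux
variable {d : ℕ}

lemma φ_kill_span (T : Finset (Fin d)) (S : Set (R d)) (hS : ∀ g ∈ S, φ T g = 0)
    {f : R d} (hf : f ∈ Ideal.span S) : φ T f = 0 := by
  have hle : Ideal.span S ≤ RingHom.ker (φ T) :=
    Ideal.span_le.mpr fun g hg => by rw [SetLike.mem_coe, RingHom.mem_ker]; exact hS g hg
  exact RingHom.mem_ker.mp (hle hf)

end GlueAux

theorem glue_smooth_cone_aux (d : ℕ) (F : Fin d → AddMonoidAlgebra ℤ (Fin d → ℤ))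
    (h : ∀ i j, i ≠ j → F i - F j ∈
      Ideal.span {1 - Lmon d (Pi.single i 1), 1 - Lmon d (Pi.single j 1)}) :
    ∃ G : AddMonoidAlgebra ℤ (Fin d → ℤ),
      ∀ i, G - F i ∈ Ideal.span {1 - Lmon d (Pi.single i 1)} := by
  classical
  suffices H : ∀ s : Finset (Fin d), ∃ G : AddMonoidAlgebra ℤ (Fin d → ℤ),
      ∀ i ∈ s, G - F i ∈ GlueAux.I i by
    obtain ⟨G, hG⟩ := H Finset.univ
    exact ⟨G, fun i => hG i (Finset.mem_univ i)⟩
  intro s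
  induction s using Finset.induction_on with
  | empty => exact ⟨0, fun i hi => absurd hi (Finset.notMem_empty i)⟩
  | @insert a s ha ih =>
    obtain ⟨G, hG⟩ := ih
    set H₀ : GlueAux.R d := F a - G with hH₀
    set c : GlueAux.R d :=
      ∑ T ∈ s.powerset, (-1 : GlueAux.R d) ^ T.card * GlueAux.φ T H₀ with hc
    have hkey : ∀ T : Finset (Fin d), T ⊆ s → T.Nonempty →
        GlueAux.φ (insert a T) H₀ = 0 := by
      intro T hTs hTne
      obtain ⟨i, hiT⟩ := hTne
      have hia : i ≠ a := fun hh => ha (hh ▸ hTs hiT)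
      have hφi : GlueAux.φ {i} H₀ = GlueAux.φ {i} (F a - F i) := by
        have hsplit : H₀ = (F a - F i) + (F i - G) := by rw [hH₀]; ring
        rw [hsplit, map_add]
        have h0 : GlueAux.φ ({i} : Finset (Fin d)) (F i - G) = 0 := by
          have hmem : F i - G ∈ GlueAux.I i := by
            have hmm := (GlueAux.I i).neg_mem (hG i (hTs hiT))
            simpa using hmm
          refine GlueAux.φ_kill_span {i} _ ?_ hmem
          intro g hg
          rw [Set.mem_singleton_iff] at hg
          rw [hg]
          exact GlueAux.φ_kill_gen {i} i (Finset.mem_singleton_self i)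
        rw [h0, add_zero]
      have hai : GlueAux.φ ({a} ∪ {i} : Finset (Fin d)) (F a - F i) = 0 := by
        refine GlueAux.φ_kill_span _ _ ?_ (h a i (Ne.symm hia))
        intro g hg
        rcases hg with hg | hg
        · rw [hg]
          exact GlueAux.φ_kill_gen _ a (by simp)
        · rw [Set.mem_singleton_iff] at hg
          rw [hg]
          exact GlueAux.φ_kill_gen _ i (by simp)
      have h2 : GlueAux.φ ({a} ∪ {i} : Finset (Fin d)) H₀ = 0 := by
        rw [← GlueAux.φ_comp, hφi, GlueAux.φ_comp, hai]
      have hset : T.erase i ∪ ({a} ∪ {i}) = insert a T := by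
        ext x
        simp only [Finset.mem_union, Finset.mem_erase, Finset.mem_insert,
          Finset.mem_singleton]
        constructor
        · rintro (⟨hx, hxT⟩ | (hx | hx))
          · exact Or.inr hxT
          · exact Or.inl hx
          · exact Or.inr (hx ▸ hiT)
        · rintro (hx | hxT)
          · exact Or.inr (Or.inl hx)
          · by_cases hxi : x = i
            · exact Or.inr (Or.inr hxi)
            · exact Or.inl ⟨hxi, hxT⟩
      calc GlueAux.φ (insert a T) H₀
          = GlueAux.φ (T.erase i) (GlueAux.φ ({a} ∪ {i}) H₀) := by
            rw [GlueAux.φ_comp, hset]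
        _ = 0 := by rw [h2, map_zero]
    have hcI : ∀ i ∈ s, c ∈ GlueAux.I i := by
      intro i his
      rw [← Ideal.Quotient.eq_zero_iff_mem, hc, map_sum]
      have hinot : i ∉ s.erase i := Finset.notMem_erase i s
      have hs' : s = insert i (s.erase i) := (Finset.insert_erase his).symm
      rw [hs', Finset.sum_powerset_insert hinot, ← Finset.sum_add_distrib]
      apply Finset.sum_eq_zero
      intro T hT
      rw [Finset.mem_powerset] at hT
      have hiT : i ∉ T := fun hx => hinot (hT hx)
      have hcard : (insert i T).card = T.card + 1 := Finset.card_insert_of_notMem hiT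
      have hmk : Ideal.Quotient.mk (GlueAux.I i) (GlueAux.φ (insert i T) H₀)
          = Ideal.Quotient.mk (GlueAux.I i) (GlueAux.φ T H₀) := by
        rw [Finset.insert_eq, ← GlueAux.φ_comp]
        exact GlueAux.mk_φ_single i _
      rw [map_mul, map_mul, hmk, hcard, map_pow, map_pow, pow_succ, map_neg, map_one]
      ring
    have hca : Ideal.Quotient.mk (GlueAux.I a) c = Ideal.Quotient.mk (GlueAux.I a) H₀ := by
      rw [hc, map_sum]
      rw [Finset.sum_eq_single (∅ : Finset (Fin d))]
      · simp [GlueAux.φ_empty]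
      · intro T hT hTne
        rw [Finset.mem_powerset] at hT
        have h0 : GlueAux.φ (insert a T) H₀ = 0 :=
          hkey T hT (Finset.nonempty_iff_ne_empty.mpr hTne)
        have hz : Ideal.Quotient.mk (GlueAux.I a) (GlueAux.φ T H₀) = 0 := by
          rw [← GlueAux.mk_φ_single a (GlueAux.φ T H₀), GlueAux.φ_comp,
            ← Finset.insert_eq, h0, map_zero]
        rw [map_mul, hz, mul_zero]
      · intro hmem
        exact absurd (Finset.empty_mem_powerset s) hmem
    refine ⟨G + c, ?_⟩
    intro i hi
    rw [Finset.mem_insert] at hi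
    rw [← Ideal.Quotient.eq_zero_iff_mem]
    rcases hi with rfl | his
    · have hrw : G + c - F i = c - H₀ := by rw [hH₀]; ring
      rw [hrw, map_sub, hca, sub_self]
    · have hrw : G + c - F i = (G - F i) + c := by ring
      rw [hrw, map_add, Ideal.Quotient.eq_zero_iff_mem.mpr (hG i his),
        Ideal.Quotient.eq_zero_iff_mem.mpr (hcI i his), add_zero]

/-- Lemma 6.1 (key algebraic content): in `ℤ[α₁^{±1},…,α_d^{±1}]`, a family of
Laurent polynomials `F₁,…,F_d` with `F_i - F_j ∈ ⟨1-α_i, 1-α_j⟩` for all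
`i ≠ j` glues to a single Laurent polynomial `F` with `F - F_i ∈ ⟨1-α_i⟩`. -/
theorem glue_smooth_cone (d : ℕ) (F : Fin d → AddMonoidAlgebra ℤ (Fin d → ℤ))
    (h : ∀ i j, i ≠ j → F i - F j ∈
      Ideal.span {1 - Lmon d (Pi.single i 1), 1 - Lmon d (Pi.single j 1)}) :
    ∃ G : AddMonoidAlgebra ℤ (Fin d → ℤ),
      ∀ i, G - F i ∈ Ideal.span {1 - Lmon d (Pi.single i 1)} := by
  exact glue_smooth_cone_aux d F h
end

section
/- Consider the complete fan Σ in R^2 with three rays generated by the primitive vectors v_0, v_1, v_2 ∈ Z^2, where v_0 + v_1 + v_2 = 0 and R^2 is the nonnegative span of v_0, v_1, v_2. If v_0, v_1, v_2 do not span Z^2 over Z (i.e., Σ defines a fake weighted projective plane that is not a weighted projective plane), then the sum J_{ρ_0} + J_{ρ_1} + J_{ρ_2} of the lattice ideals of the rays in Z[α^{±1},β^{±1}] is a proper subideal of ⟨1 - α, 1 - β⟩. -/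
lemma lmon_mul (a b : Fin 2 → ℤ) : Lmon 2 a * Lmon 2 b = Lmon 2 (a + b) := by
  simp [Lmon, AddMonoidAlgebra.single_mul_single]

lemma lmon_zero : Lmon 2 0 = 1 := by simp [Lmon]; rfl

/-- Every `1 - x^w` lies in the augmentation ideal `⟨1-α, 1-β⟩`. -/
lemma mem_aug (w : Fin 2 → ℤ) :
    1 - Lmon 2 w ∈ Ideal.span {1 - Lmon 2 (Pi.single 0 1), 1 - Lmon 2 (Pi.single 1 1)} := by
  set I := Ideal.span {1 - Lmon 2 (Pi.single 0 1), 1 - Lmon 2 (Pi.single 1 1)} with hI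
  let S : AddSubgroup (Fin 2 → ℤ) :=
    { carrier := {w | 1 - Lmon 2 w ∈ I}
      zero_mem' := by simp [lmon_zero]
      add_mem' := by
        intro a b ha hb
        have key : 1 - Lmon 2 (a + b) = (1 - Lmon 2 a) + Lmon 2 a * (1 - Lmon 2 b) := by
          rw [mul_sub, mul_one, lmon_mul]; ring
        simpa [Set.mem_setOf_eq, key] using add_mem ha (Ideal.mul_mem_left _ _ hb)
      neg_mem' := by
        intro a ha
        have key : 1 - Lmon 2 (-a) = (-Lmon 2 (-a)) * (1 - Lmon 2 a) := by
          rw [neg_mul, mul_sub, mul_one, lmon_mul, neg_add_cancel, lmon_zero]; ring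
        simpa [Set.mem_setOf_eq, key] using Ideal.mul_mem_left _ _ ha }
  have h0 : (Pi.single 0 1 : Fin 2 → ℤ) ∈ S :=
    Ideal.subset_span (by simp)
  have h1 : (Pi.single 1 1 : Fin 2 → ℤ) ∈ S :=
    Ideal.subset_span (by simp)
  have hw : w = w 0 • (Pi.single 0 1 : Fin 2 → ℤ) + w 1 • Pi.single 1 1 := by
    funext j; fin_cases j <;> simp
  have : w ∈ S := by
    rw [hw]; exact add_mem (zsmul_mem h0 _) (zsmul_mem h1 _)
  exact this

/-- Two primitive vectors in `ℤ²` that are perpendicular differ by a rotation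
by `±π/2`. -/
lemma rot_lemma (a b c d : ℤ) (hab : IsCoprime a b) (hcd : IsCoprime c d)
    (h : c * a + d * b = 0) : ∃ k : ℤ, (k = 1 ∨ k = -1) ∧ c = k * b ∧ d = -(k * a) := by
  obtain ⟨u, t, hut⟩ := hab
  have hc : c = (t * c - u * d) * b := by linear_combination u * h - c * hut
  have hd : d = -((t * c - u * d) * a) := by linear_combination t * h - d * hut
  refine ⟨t * c - u * d, ?_, hc, hd⟩
  have : IsUnit (t * c - u * d) := by
    rcases hcd with ⟨x, y, hxy⟩
    refine IsUnit.of_mul_eq_one (x * b - y * a) ?_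
    linear_combination hxy - x * hc - y * hd
  rcases Int.isUnit_iff.mp this with h' | h' <;> [left; right] <;> exact h'

/-- Rotation by `-π/2` on `ℤ²`. -/
noncomputable def Rot : (Fin 2 → ℤ) →ₗ[ℤ] (Fin 2 → ℤ) where
  toFun x := ![x 1, -x 0]
  map_add' x y := by funext j; fin_cases j <;> simp <;> ring
  map_smul' m x := by funext j; fin_cases j <;> simp

lemma rot_inj : Function.Injective Rot := by
  intro x y h
  funext j
  have h0 := congrFun h 0
  have h1 := congrFun h 1
  simp [Rot] at h0 h1
  fin_cases j <;> simp [h0, h1]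

/-- Since `ν i = ± Rot (v i)`, the `ν i` span `ℤ²` iff the `v i` do. -/
lemma span_nu_ne_top (v ν : Fin 3 → Fin 2 → ℤ)
    (hprim : ∀ i, IsCoprime (v i 0) (v i 1))
    (hperp : ∀ i, ν i 0 * v i 0 + ν i 1 * v i 1 = 0)
    (hνprim : ∀ i, IsCoprime (ν i 0) (ν i 1))
    (hnotspan : Submodule.span ℤ (Set.range v) ≠ ⊤) :
    Submodule.span ℤ (Set.range ν) ≠ ⊤ := by
  have hk : ∀ i, ∃ k : ℤ, (k = 1 ∨ k = -1) ∧ ν i = k • Rot (v i) := by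
    intro i
    obtain ⟨k, hk1, hc, hd⟩ := rot_lemma (v i 0) (v i 1) (ν i 0) (ν i 1)
      (hprim i) (hνprim i) (hperp i)
    refine ⟨k, hk1, ?_⟩
    funext j; fin_cases j
    · simpa [Rot] using hc
    · simpa [Rot] using hd
  have hspan : Submodule.span ℤ (Set.range ν) =
      Submodule.span ℤ (Set.range (fun i => Rot (v i))) := by
    apply le_antisymm <;> rw [Submodule.span_le] <;> rintro _ ⟨i, rfl⟩
    · obtain ⟨k, _, hkk⟩ := hk i
      rw [hkk]
      exact Submodule.smul_mem _ _ (Submodule.subset_span ⟨i, rfl⟩)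
    · obtain ⟨k, hk1, hkk⟩ := hk i
      show Rot (v i) ∈ _
      have : Rot (v i) = k • ν i := by
        rw [hkk, smul_smul]
        rcases hk1 with h | h <;> simp [h]
      rw [this]
      exact Submodule.smul_mem _ _ (Submodule.subset_span ⟨i, rfl⟩)
  have hmap : Submodule.span ℤ (Set.range (fun i => Rot (v i))) =
      (Submodule.span ℤ (Set.range v)).map Rot := by
    rw [Submodule.map_span, ← Set.range_comp]; rfl
  rw [hspan, hmap]
  intro htop
  apply hnotspan
  have := congrArg (Submodule.comap Rot) htop
  rwa [Submodule.comap_map_eq_of_injective rot_inj, Submodule.comap_top] at this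

/-- If the `ν i` do not span `ℤ²`, then one of the generators `1-α`, `1-β`
is not in the sum of the lattice ideals of the rays. -/
lemma not_mem_sum (ν : Fin 3 → Fin 2 → ℤ)
    (hne : Submodule.span ℤ (Set.range ν) ≠ ⊤) :
    ∃ e ∈ ({Pi.single 0 1, Pi.single 1 1} : Set (Fin 2 → ℤ)),
      1 - Lmon 2 e ∉ (∑ i, Ideal.span {1 - Lmon 2 (ν i)}) := by
  set M := Submodule.span ℤ (Set.range ν) with hM
  have hex : (Pi.single 0 1 : Fin 2 → ℤ) ∉ M ∨ (Pi.single 1 1 : Fin 2 → ℤ) ∉ M := by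
    by_contra hcon
    push_neg at hcon
    apply hne
    rw [eq_top_iff]
    intro w _
    have hw : w = w 0 • (Pi.single 0 1 : Fin 2 → ℤ) + w 1 • Pi.single 1 1 := by
      funext j; fin_cases j <;> simp
    rw [hw]
    exact add_mem (M.smul_mem _ hcon.1) (M.smul_mem _ hcon.2)
  let Φ : AddMonoidAlgebra ℤ (Fin 2 → ℤ) →+* AddMonoidAlgebra ℤ ((Fin 2 → ℤ) ⧸ M) :=
    AddMonoidAlgebra.mapDomainRingHom ℤ M.mkQ
  have hΦ : ∀ w : Fin 2 → ℤ, Φ (Lmon 2 w) = AddMonoidAlgebra.single (M.mkQ w) 1 := by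
    intro w
    simp [Φ, Lmon, AddMonoidAlgebra.mapDomainRingHom, Finsupp.mapDomain_single]
  have hker : (∑ i, Ideal.span {1 - Lmon 2 (ν i)}) ≤ RingHom.ker Φ := by
    rw [Ideal.sum_eq_sup]
    apply Finset.sup_le
    intro i _
    rw [Ideal.span_le]
    rintro _ rfl
    simp only [SetLike.mem_coe, RingHom.mem_ker, map_sub, map_one, hΦ]
    have : M.mkQ (ν i) = 0 := by
      simp [Submodule.Quotient.mk_eq_zero]
      exact Submodule.subset_span ⟨i, rfl⟩
    rw [this]
    simp [AddMonoidAlgebra.one_def]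
  have key : ∀ e : Fin 2 → ℤ, e ∉ M → 1 - Lmon 2 e ∉ (∑ i, Ideal.span {1 - Lmon 2 (ν i)}) := by
    intro e he hmem
    have := hker hmem
    rw [RingHom.mem_ker, map_sub, map_one, hΦ, sub_eq_zero] at this
    rw [AddMonoidAlgebra.one_def] at this
    have := AddMonoidAlgebra.single_inj.mp this
    rcases this with ⟨h1, _⟩ | ⟨h1, _⟩
    · exact he (by simpa [Submodule.Quotient.mk_eq_zero] using h1.symm)
    · exact one_ne_zero h1
  rcases hex with h | h
  · exact ⟨_, Set.mem_insert _ _, key _ h⟩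
  · exact ⟨_, Set.mem_insert_of_mem _ rfl, key _ h⟩

/-- For the fan of a fake weighted projective plane which is not a weighted
projective plane (primitive `v 0, v 1, v 2` with `v 0 + v 1 + v 2 = 0`,
nonnegatively spanning `ℝ²`, but not ℤ-spanning `ℤ²`), the sum of the lattice
ideals `J_{ρ_i} = ⟨1 - x^{ν_i}⟩` of the rays is a proper subideal of
`⟨1-α, 1-β⟩` in `ℤ[α^{±1},β^{±1}]`. -/
theorem fake_wps_sum_ray_ideals_proper (v ν : Fin 3 → Fin 2 → ℤ)
    (hprim : ∀ i, IsCoprime (v i 0) (v i 1))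
    (hsum : v 0 + v 1 + v 2 = 0)
    (hcomplete : ∀ x : Fin 2 → ℝ, ∃ c : Fin 3 → ℝ, (∀ i, 0 ≤ c i) ∧
      ∀ t, x t = ∑ i, c i * (v i t : ℝ))
    (hperp : ∀ i, ν i 0 * v i 0 + ν i 1 * v i 1 = 0)
    (hνprim : ∀ i, IsCoprime (ν i 0) (ν i 1))
    (hnotspan : Submodule.span ℤ (Set.range v) ≠ ⊤) :
    (∑ i, Ideal.span {1 - Lmon 2 (ν i)}) <
      Ideal.span {1 - Lmon 2 (Pi.single 0 1), 1 - Lmon 2 (Pi.single 1 1)} := by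
  have hle : (∑ i, Ideal.span {1 - Lmon 2 (ν i)}) ≤
      Ideal.span {1 - Lmon 2 (Pi.single 0 1), 1 - Lmon 2 (Pi.single 1 1)} := by
    rw [Ideal.sum_eq_sup]
    apply Finset.sup_le
    intro i _
    rw [Ideal.span_le]
    rintro _ rfl
    exact mem_aug (ν i)
  obtain ⟨e, he, hnot⟩ := not_mem_sum ν (span_nu_ne_top v ν hprim hperp hνprim hnotspan)
  refine lt_of_le_of_ne hle (fun heq => hnot ?_)
  rw [heq]
  apply Ideal.subset_span
  rcases he with rfl | rfl
  · exact Set.mem_insert _ _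
  · exact Set.mem_insert_of_mem _ rfl
end

section
/- Let R be a commutative ring, and for ideals I of R let R/I denote the quotient. Let J_1,...,J_{k+1} be ideals of R. Define # : R → (R/J_1) × (R/J_{k+1}) by F ↦ (F mod J_1, F mod J_{k+1}) (restriction of a global function to two boundary pieces via the chain J_1,...,J_{k+1}). Then the image of the map sending (F_1,...,F_k) with F_{i+1} - F_i ∈ J_{i+1} (for 1 ≤ i ≤ k-1) to (F_1 mod J_1, F_k mod J_{k+1}) is exactly {(f mod J_1, g mod J_{k+1}) : f - g ∈ J_1 + ... + J_{k+1}}. -/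
/-- Ring-theoretic abstraction of Lemma 3.3: for ideals `J 0, …, J k` of a
commutative ring `R` (playing the roles of `J_{ρ₁}, …, J_{ρ_{k+1}}`), the image
of the map sending a chain `(F 0, …, F (k-1))` with `F (i+1) - F i ∈ J (i+1)`
to `(F 0 mod J 0, F (k-1) mod J k)` consists exactly of the pairs
`(f mod J 0, g mod J k)` with `f - g ∈ J 0 + ⋯ + J k`. -/
theorem image_restriction_eq {R : Type*} [CommRing R] (k : ℕ) (hk : 1 ≤ k)
    (J : ℕ → Ideal R) (f g : R) :
    (∃ F : ℕ → R, (∀ i : ℕ, i + 1 < k → F (i + 1) - F i ∈ J (i + 1)) ∧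
        Ideal.Quotient.mk (J 0) (F 0) = Ideal.Quotient.mk (J 0) f ∧
        Ideal.Quotient.mk (J k) (F (k - 1)) = Ideal.Quotient.mk (J k) g) ↔
      f - g ∈ ∑ i ∈ Finset.range (k + 1), J i := by
  have key : ∀ i ∈ Finset.range (k + 1), J i ≤ ∑ j ∈ Finset.range (k + 1), J j := by
    intro i hi
    rw [Ideal.sum_eq_sup]
    exact Finset.le_sup hi
  constructor
  · rintro ⟨F, hF, h0, hk'⟩
    rw [Ideal.Quotient.eq] at h0 hk'
    have h1 := key 0 (by simp) h0
    have h2 := key k (by simp) hk'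
    have h3 : F (k - 1) - F 0 ∈ ∑ j ∈ Finset.range (k + 1), J j := by
      rw [← Finset.sum_range_sub F (k - 1)]
      refine Submodule.sum_mem _ fun i hi => ?_
      rw [Finset.mem_range] at hi
      exact key (i + 1) (Finset.mem_range.2 (by omega)) (hF i (by omega))
    have heq : f - g = -(F 0 - f) - (F (k - 1) - F 0) + (F (k - 1) - g) := by ring
    rw [heq]
    exact add_mem (sub_mem (neg_mem h1) h3) h2
  · intro h
    rw [Ideal.sum_eq_sup, Finset.sup_eq_iSup] at h
    obtain ⟨μ, hμ⟩ := (Submodule.mem_iSup_finset_iff_exists_sum _ _).1 h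
    set a : ℕ → R := fun i => (μ i : R) with ha
    refine ⟨fun j => f - ∑ i ∈ Finset.range (j + 1), a i, ?_, ?_, ?_⟩
    · intro i hi
      have : (f - ∑ j ∈ Finset.range (i + 2), a j) - (f - ∑ j ∈ Finset.range (i + 1), a j)
          = -(a (i + 1)) := by
        rw [Finset.sum_range_succ]; ring
      rw [this]
      exact neg_mem (μ (i + 1)).2
    · rw [Ideal.Quotient.eq]
      have : (f - ∑ i ∈ Finset.range 1, a i) - f = -(a 0) := by simp
      rw [this]
      exact neg_mem (μ 0).2
    · rw [Ideal.Quotient.eq]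
      have hk1 : k - 1 + 1 = k := by omega
      have hsum : (∑ i ∈ Finset.range k, a i) + a k = f - g := by
        rw [← Finset.sum_range_succ]; exact hμ
      have : (f - ∑ i ∈ Finset.range (k - 1 + 1), a i) - g = a k := by
        rw [hk1]
        have : (∑ i ∈ Finset.range k, a i) = f - g - a k := by linear_combination hsum
        rw [this]; ring
      rw [this]
      exact (μ k).2
end
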